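/- Let H₀, H₁, H₂ be complex Hilbert spaces and let T : H₀ → H₁ and S : H₁ → H₂ be closed, densely defined linear operators with Ran T ⊆ Ker S. Assume the compactness property: every sequence (u_k) in Dom S ∩ Dom T* with sup_k ‖u_k‖ < ∞, ‖S u_k‖ → 0 and ‖T* u_k‖ → 0 has a subsequence converging in H₁. Then for every f ∈ Ran T there exists a unique u ∈ Dom T such that T u = f and u is orthogonal to Ker T; moreover this u lies in Ran T*, i.e. u = T* w for some w ∈ Dom T*. -/

import Mathlib

open Filter

variable {H₀ H₁ H₂ : Type*}
  [NormedAddCommGroup H₀] [InnerProductSpace ℂ H₀] [CompleteSpace H₀]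
  [NormedAddCommGroup H₁] [InnerProductSpace ℂ H₁] [CompleteSpace H₁]
  [NormedAddCommGroup H₂] [InnerProductSpace ℂ H₂] [CompleteSpace H₂]

/-- The compactness property for the pair `(T, S)`:  every sequence `uₖ` in
`Dom S ∩ Dom T.adjoint` which is bounded in `H₁` and satisfies `‖S uₖ‖ → 0` and
`‖T.adjoint uₖ‖ → 0` admits a norm-convergent subsequence.  Membership in the domain together
with the value of the operator is encoded via graphs: `(u, s) ∈ S.graph` means `u ∈ Dom S` and
`S u = s`. -/
def CompactnessProperty (T : H₀ →ₗ.[ℂ] H₁) (S : H₁ →ₗ.[ℂ] H₂) : Prop :=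
  ∀ (u : ℕ → H₁) (s : ℕ → H₂) (t : ℕ → H₀),
    (∀ k, (u k, s k) ∈ S.graph) → (∀ k, (u k, t k) ∈ T.adjoint.graph) →
    (∃ M : ℝ, ∀ k, ‖u k‖ ≤ M) →
    Tendsto (fun k => ‖s k‖) atTop (nhds 0) →
    Tendsto (fun k => ‖t k‖) atTop (nhds 0) →
    ∃ (φ : ℕ → ℕ) (L : H₁), StrictMono φ ∧ Tendsto (u ∘ φ) atTop (nhds L)

/-- The harmonic space `ℋ = Ker S ∩ Ker T*` as a subspace of `H₁`:
`u ∈ ℋ` iff `(u, 0) ∈ S.graph` (i.e. `u ∈ Dom S` and `S u = 0`) and `(u, 0) ∈ T.adjoint.graph`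
(i.e. `u ∈ Dom T*` and `T* u = 0`). -/
noncomputable def harmonicSpace (T : H₀ →ₗ.[ℂ] H₁) (S : H₁ →ₗ.[ℂ] H₂) : Submodule ℂ H₁ :=
  (S.graph.comap ((LinearMap.id : H₁ →ₗ[ℂ] H₁).prod (0 : H₁ →ₗ[ℂ] H₂))) ⊓
  (T.adjoint.graph.comap ((LinearMap.id : H₁ →ₗ[ℂ] H₁).prod (0 : H₁ →ₗ[ℂ] H₀)))

/-- The graph of the Laplacian `Δ = S* S + T T*`:  `(u, w) ∈ lapGraph T S` iff
`u ∈ Dom S ∩ Dom T*`, `S u ∈ Dom S*`, `T* u ∈ Dom T` and `w = S* (S u) + T (T* u)`. -/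
noncomputable def lapGraph (T : H₀ →ₗ.[ℂ] H₁) (S : H₁ →ₗ.[ℂ] H₂) : Set (H₁ × H₁) :=
  {p : H₁ × H₁ | ∃ (a : H₂) (b : H₀) (c d : H₁),
    (p.1, a) ∈ S.graph ∧ (a, c) ∈ S.adjoint.graph ∧
    (p.1, b) ∈ T.adjoint.graph ∧ (b, d) ∈ T.graph ∧ p.2 = c + d}

section AuxiliaryLemmas

set_option linter.unusedSectionVars false

/-- Membership in the graph of the adjoint, characterized by the graph of `T`. -/
lemma stmt7_mem_adj_graph_iff {T : H₀ →ₗ.[ℂ] H₁} (hTdense : Dense (T.domain : Set H₀))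
    (y : H₁) (w : H₀) :
    (y, w) ∈ T.adjoint.graph ↔
      ∀ p : H₀ × H₁, p ∈ T.graph → (inner ℂ w p.1 : ℂ) = inner ℂ y p.2 := by
  constructor
  · rintro hyw p hp
    rw [LinearPMap.mem_graph_iff] at hyw hp
    obtain ⟨a, ha1, ha2⟩ := hyw
    obtain ⟨b, hb1, hb2⟩ := hp
    have := LinearPMap.adjoint_isFormalAdjoint hTdense a b
    rw [ha2, hb2, ha1, hb1] at this
    exact this
  · intro h
    have hmem : y ∈ T.adjoint.domain := by
      apply LinearPMap.mem_adjoint_domain_of_exists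
      exact ⟨w, fun x => h (x, T x) (T.mem_graph x)⟩
    have happ : T.adjoint ⟨y, hmem⟩ = w :=
      LinearPMap.adjoint_apply_eq hTdense ⟨y, hmem⟩ (fun x => (h (x, T x) (T.mem_graph x)))
    rw [LinearPMap.mem_graph_iff]
    exact ⟨⟨y, hmem⟩, rfl, happ⟩

lemma stmt7_adj_graph_closed {T : H₀ →ₗ.[ℂ] H₁} (hTdense : Dense (T.domain : Set H₀)) :
    IsClosed (T.adjoint.graph : Set (H₁ × H₀)) := by
  have : (T.adjoint.graph : Set (H₁ × H₀)) =
      ⋂ p ∈ (T.graph : Set (H₀ × H₁)),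
        {q : H₁ × H₀ | (inner ℂ q.2 p.1 : ℂ) = inner ℂ q.1 p.2} := by
    ext ⟨y, w⟩
    simp only [Set.mem_iInter, Set.mem_setOf_eq, SetLike.mem_coe]
    exact stmt7_mem_adj_graph_iff hTdense y w
  rw [this]
  refine isClosed_biInter fun p _ => isClosed_eq ?_ ?_
  · exact (continuous_snd.inner continuous_const)
  · exact (continuous_fst.inner continuous_const)

/-- If `T` is closed and densely defined and `⟪u, t⟫ = ⟪f, v⟫` for all `(v, t)` in the graph of
`T*`, then `(u, f)` is in the graph of `T`. -/
lemma stmt7_mem_graph_of_forall_adjoint {T : H₀ →ₗ.[ℂ] H₁} (hTclosed : T.IsClosed)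
    (hTdense : Dense (T.domain : Set H₀)) {u : H₀} {f : H₁}
    (h : ∀ q : H₁ × H₀, q ∈ T.adjoint.graph → (inner ℂ u q.2 : ℂ) = inner ℂ f q.1) :
    (u, f) ∈ T.graph := by
  set e : WithLp 2 (H₀ × H₁) ≃L[ℂ] H₀ × H₁ := WithLp.prodContinuousLinearEquiv 2 ℂ H₀ H₁ with he
  set G : Submodule ℂ (WithLp 2 (H₀ × H₁)) :=
    T.graph.comap (e : WithLp 2 (H₀ × H₁) →ₗ[ℂ] H₀ × H₁) with hG
  have hGclosed : IsClosed (G : Set (WithLp 2 (H₀ × H₁))) := by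
    have : (G : Set (WithLp 2 (H₀ × H₁))) = e ⁻¹' (T.graph : Set (H₀ × H₁)) := rfl
    rw [this]
    exact hTclosed.preimage e.continuous
  haveI : CompleteSpace G := hGclosed.completeSpace_coe
  have key : e.symm (u, f) ∈ Gᗮᗮ := by
    rw [Submodule.mem_orthogonal]
    intro r hr
    rw [Submodule.mem_orthogonal] at hr
    set a : H₀ := (e r).1 with ha
    set b : H₁ := (e r).2 with hb
    have hr' : ∀ p : H₀ × H₁, p ∈ T.graph →
        (inner ℂ p.1 a : ℂ) + inner ℂ p.2 b = 0 := by
      intro p hp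
      have := hr (e.symm p) (by simp [hG, Submodule.mem_comap, hp])
      rw [WithLp.prod_inner_apply] at this
      exact this
    have hba : (b, -a) ∈ T.adjoint.graph := by
      rw [stmt7_mem_adj_graph_iff hTdense]
      intro p hp
      have := hr' p hp
      rw [inner_neg_left]
      have h1 : (inner ℂ a p.1 : ℂ) = - inner ℂ b p.2 := by
        have := congrArg (starRingEnd ℂ) (hr' p hp)
        simp only [map_add, map_zero, inner_conj_symm] at this
        linear_combination this
      rw [h1]; ring
    have hub : (inner ℂ u (-a) : ℂ) = inner ℂ f b := h (b, -a) hba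
    have heq : (inner ℂ r (e.symm (u, f)) : ℂ) = inner ℂ a u + inner ℂ b f := rfl
    rw [heq]
    have h3 : (inner ℂ u a : ℂ) = - inner ℂ f b := by
      rw [inner_neg_right] at hub
      linear_combination -hub
    have h4 := congrArg (starRingEnd ℂ) h3
    simp only [map_neg, inner_conj_symm] at h4
    rw [h4]; ring
  rw [Submodule.orthogonal_orthogonal] at key
  have : e (e.symm (u, f)) ∈ T.graph := key
  simpa using this

lemma stmt7_mem_harmonic (T : H₀ →ₗ.[ℂ] H₁) (S : H₁ →ₗ.[ℂ] H₂) (u : H₁) :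
    u ∈ harmonicSpace T S ↔ (u, (0:H₂)) ∈ S.graph ∧ (u, (0:H₀)) ∈ T.adjoint.graph := by
  simp [harmonicSpace, Submodule.mem_inf, Submodule.mem_comap]

lemma stmt7_estimate {T : H₀ →ₗ.[ℂ] H₁} {S : H₁ →ₗ.[ℂ] H₂}
    (hTdense : Dense (T.domain : Set H₀)) (hSclosed : S.IsClosed)
    (hcpt : CompactnessProperty T S) :
    ∃ c : ℝ, ∀ v : H₁, ∀ t : H₀, (v, (0:H₂)) ∈ S.graph → (v, t) ∈ T.adjoint.graph →
      v ∈ (harmonicSpace T S)ᗮ → ‖v‖ ≤ c * ‖t‖ := by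
  by_contra hc
  push_neg at hc
  have hsel : ∀ k : ℕ, ∃ v : H₁, ∃ t : H₀, (v, (0:H₂)) ∈ S.graph ∧ (v, t) ∈ T.adjoint.graph ∧
      v ∈ (harmonicSpace T S)ᗮ ∧ ((k:ℝ) + 1) * ‖t‖ < ‖v‖ := by
    intro k
    obtain ⟨v, t, h1, h2, h3, h4⟩ := hc ((k:ℝ) + 1)
    exact ⟨v, t, h1, h2, h3, by linarith⟩
  choose v t hvS hvT hvH hvn using hsel
  have hvpos : ∀ k, 0 < ‖v k‖ := fun k =>
    lt_of_le_of_lt (by positivity) (hvn k)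
  set u : ℕ → H₁ := fun k => ((‖v k‖⁻¹ : ℝ) : ℂ) • v k with hu
  set t' : ℕ → H₀ := fun k => ((‖v k‖⁻¹ : ℝ) : ℂ) • t k with ht'
  have hun : ∀ k, ‖u k‖ = 1 := by
    intro k
    rw [hu]
    simp only [norm_smul, Complex.norm_real, Real.norm_eq_abs,
      abs_of_pos (inv_pos.2 (hvpos k))]
    exact inv_mul_cancel₀ (hvpos k).ne'
  have ht'n : ∀ k, ‖t' k‖ < 1 / ((k:ℝ) + 1) := by
    intro k
    rw [ht']
    simp only [norm_smul, Complex.norm_real, Real.norm_eq_abs,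
      abs_of_pos (inv_pos.2 (hvpos k))]
    rw [div_eq_mul_inv, one_mul]
    have hk : (0:ℝ) < (k:ℝ) + 1 := by positivity
    rw [inv_mul_eq_div, div_lt_iff₀ (hvpos k), inv_mul_eq_div, lt_div_iff₀ hk]
    nlinarith [hvn k]
  have huS : ∀ k, (u k, (0:H₂)) ∈ S.graph := by
    intro k
    have := S.graph.smul_mem ((‖v k‖⁻¹ : ℝ) : ℂ) (hvS k)
    simpa [hu, Prod.smul_mk] using this
  have huT : ∀ k, (u k, t' k) ∈ T.adjoint.graph := by
    intro k
    have := T.adjoint.graph.smul_mem ((‖v k‖⁻¹ : ℝ) : ℂ) (hvT k)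
    simpa [hu, ht', Prod.smul_mk] using this
  have hbd : ∃ M : ℝ, ∀ k, ‖u k‖ ≤ M := ⟨1, fun k => le_of_eq (hun k)⟩
  have hs0 : Tendsto (fun k : ℕ => ‖(0:H₂)‖) atTop (nhds 0) := by
    simpa using tendsto_const_nhds (α := ℝ) (f := atTop (α := ℕ))
  have ht0 : Tendsto (fun k => ‖t' k‖) atTop (nhds 0) := by
    have h1 : Tendsto (fun k : ℕ => 1 / ((k:ℝ) + 1)) atTop (nhds 0) :=
      tendsto_one_div_add_atTop_nhds_zero_nat
    refine squeeze_zero (fun k => norm_nonneg _) (fun k => le_of_lt (ht'n k)) h1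
  obtain ⟨φ, L, hφ, hL⟩ := hcpt u (fun _ => 0) t' huS huT hbd hs0 ht0
  have hLn : ‖L‖ = 1 := by
    have h1 : Tendsto (fun k => ‖(u ∘ φ) k‖) atTop (nhds ‖L‖) := hL.norm
    have h2 : (fun k => ‖(u ∘ φ) k‖) = fun _ => (1:ℝ) := funext fun k => hun (φ k)
    rw [h2] at h1
    exact (tendsto_nhds_unique tendsto_const_nhds h1).symm
  have hLS : (L, (0:H₂)) ∈ S.graph := by
    have htend : Tendsto (fun k => ((u ∘ φ) k, (0:H₂))) atTop (nhds (L, (0:H₂))) :=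
      hL.prodMk_nhds tendsto_const_nhds
    exact hSclosed.mem_of_tendsto htend (Eventually.of_forall fun k => huS (φ k))
  have hLT : (L, (0:H₀)) ∈ T.adjoint.graph := by
    have htt : Tendsto (t' ∘ φ) atTop (nhds 0) := by
      rw [tendsto_zero_iff_norm_tendsto_zero]
      have h1 : Tendsto (fun k : ℕ => 1 / ((k:ℝ) + 1)) atTop (nhds 0) :=
        tendsto_one_div_add_atTop_nhds_zero_nat
      refine squeeze_zero (fun k => norm_nonneg _) (fun k => ?_) h1
      calc ‖(t' ∘ φ) k‖ ≤ 1 / ((φ k : ℝ) + 1) := le_of_lt (ht'n (φ k))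
        _ ≤ 1 / ((k:ℝ) + 1) := by
            have h2 : (k:ℝ) ≤ (φ k : ℝ) := Nat.cast_le.2 (hφ.id_le k)
            apply div_le_div_of_nonneg_left one_pos.le (by positivity)
            linarith
    have htend : Tendsto (fun k => ((u ∘ φ) k, (t' ∘ φ) k)) atTop (nhds (L, (0:H₀))) :=
      hL.prodMk_nhds htt
    exact (stmt7_adj_graph_closed hTdense).mem_of_tendsto htend
      (Eventually.of_forall fun k => huT (φ k))
  have hLperp : L ∈ (harmonicSpace T S)ᗮ := by
    have hclosed : IsClosed ((harmonicSpace T S)ᗮ : Set H₁) :=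
      Submodule.isClosed_orthogonal _
    refine hclosed.mem_of_tendsto hL (Eventually.of_forall fun k => ?_)
    exact Submodule.smul_mem _ _ (hvH (φ k))
  have hLH : L ∈ harmonicSpace T S := (stmt7_mem_harmonic T S L).2 ⟨hLS, hLT⟩
  have : L = 0 := by
    have := (Submodule.mem_orthogonal _ _).1 hLperp L hLH
    simpa [inner_self_eq_zero] using this
  rw [this, norm_zero] at hLn
  exact one_ne_zero hLn.symm

end AuxiliaryLemmas

/-- For every `f ∈ Ran T` there is a unique `u ∈ Dom T` with `T u = f`
which is orthogonal to `Ker T`; moreover this `u` lies in `Ran T*`, i.e. `u = T* w` for some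
`w ∈ Dom T*`. -/
theorem stmt7 (T : H₀ →ₗ.[ℂ] H₁) (S : H₁ →ₗ.[ℂ] H₂)
    (hTclosed : T.IsClosed) (hTdense : Dense (T.domain : Set H₀))
    (hSclosed : S.IsClosed) (hSdense : Dense (S.domain : Set H₁))
    (hRanKer : ∀ (x : H₀) (y : H₁), (x, y) ∈ T.graph → (y, (0 : H₂)) ∈ S.graph)
    (hcpt : CompactnessProperty T S) :
    ∀ f : H₁, (∃ x : H₀, (x, f) ∈ T.graph) →
      ∃ u : H₀,
        ((u, f) ∈ T.graph ∧
          (∀ v : H₀, (v, (0 : H₁)) ∈ T.graph → @inner ℂ _ _ u v = 0) ∧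
          (∃ w : H₁, (w, u) ∈ T.adjoint.graph)) ∧
        (∀ u' : H₀, (u', f) ∈ T.graph →
          (∀ v : H₀, (v, (0 : H₁)) ∈ T.graph → @inner ℂ _ _ u' v = 0) → u' = u) := by
  classical
  intro f hf
  obtain ⟨x₀, hx₀⟩ := hf
  set ℋ : Submodule ℂ H₁ := harmonicSpace T S with hℋdef
  set K : Submodule ℂ H₁ :=
    S.graph.comap ((LinearMap.id : H₁ →ₗ[ℂ] H₁).prod (0 : H₁ →ₗ[ℂ] H₂)) with hKdef
  have hKmem : ∀ v : H₁, v ∈ K ↔ (v, (0:H₂)) ∈ S.graph := by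
    intro v
    rw [hKdef, Submodule.mem_comap]
    simp
  have hKclosed : IsClosed (K : Set H₁) := by
    have : (K : Set H₁) = (fun v : H₁ => (v, (0:H₂))) ⁻¹' (S.graph : Set (H₁ × H₂)) := by
      ext v
      simp [hKmem v]
    rw [this]
    exact hSclosed.preimage (continuous_id.prodMk continuous_const)
  haveI : CompleteSpace K := hKclosed.completeSpace_coe
  have hHmem := stmt7_mem_harmonic T S
  have hHclosed : IsClosed (ℋ : Set H₁) := by
    have : (ℋ : Set H₁) =
        ((fun v : H₁ => (v, (0:H₂))) ⁻¹' (S.graph : Set (H₁ × H₂))) ∩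
        ((fun v : H₁ => (v, (0:H₀))) ⁻¹' (T.adjoint.graph : Set (H₁ × H₀))) := by
      ext v
      simp [hHmem v, hℋdef]
    rw [this]
    exact (hSclosed.preimage (continuous_id.prodMk continuous_const)).inter
      ((stmt7_adj_graph_closed hTdense).preimage (continuous_id.prodMk continuous_const))
  haveI : CompleteSpace ℋ := hHclosed.completeSpace_coe
  obtain ⟨c₀, hc₀⟩ := stmt7_estimate hTdense hSclosed hcpt
  set c : ℝ := max c₀ 1 with hcdef
  have hc1 : 0 < c := lt_of_lt_of_le one_pos (le_max_right _ _)
  have hest : ∀ v : H₁, ∀ t : H₀, (v, (0:H₂)) ∈ S.graph → (v, t) ∈ T.adjoint.graph →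
      v ∈ ℋᗮ → ‖v‖ ≤ c * ‖t‖ := by
    intro v t h1 h2 h3
    exact (hc₀ v t h1 h2 h3).trans
      (mul_le_mul_of_nonneg_right (le_max_left _ _) (norm_nonneg _))
  set A : Submodule ℂ (H₁ × H₀) :=
    T.adjoint.graph ⊓ ((K ⊓ ℋᗮ).comap (LinearMap.fst ℂ H₁ H₀)) with hAdef
  have hAmem : ∀ p : H₁ × H₀, p ∈ A ↔
      (p ∈ T.adjoint.graph ∧ p.1 ∈ K ∧ p.1 ∈ ℋᗮ) := by
    intro p
    rw [hAdef]
    simp [Submodule.mem_inf, Submodule.mem_comap, and_assoc]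
  have hAuniq : ∀ v v' : H₁, ∀ t : H₀, (v, t) ∈ A → (v', t) ∈ A → v = v' := by
    intro v v' t h h'
    have hsub : (v - v', (0:H₀)) ∈ A := by
      have := A.sub_mem h h'
      simpa [Prod.mk_sub_mk] using this
    obtain ⟨h1, h2, h3⟩ := (hAmem _).1 hsub
    have hle := hest (v - v') 0 ((hKmem _).1 h2) h1 h3
    rw [norm_zero, mul_zero] at hle
    have : v - v' = 0 := norm_le_zero_iff.1 hle
    exact sub_eq_zero.1 this
  have hAclosed : IsClosed (A : Set (H₁ × H₀)) := by
    have : (A : Set (H₁ × H₀)) = (T.adjoint.graph : Set (H₁ × H₀)) ∩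
        ((fun p : H₁ × H₀ => p.1) ⁻¹' ((K : Set H₁) ∩ ((ℋᗮ : Submodule ℂ H₁) : Set H₁))) := by
      ext p
      simp only [SetLike.mem_coe, Set.mem_inter_iff, Set.mem_preimage, hAmem p]
    rw [this]
    exact (stmt7_adj_graph_closed hTdense).inter
      ((hKclosed.inter (Submodule.isClosed_orthogonal ℋ)).preimage continuous_fst)
  set W : Submodule ℂ H₀ := A.map (LinearMap.snd ℂ H₁ H₀) with hWdef
  have hWmem : ∀ t : H₀, t ∈ W ↔ ∃ v : H₁, (v, t) ∈ A := by
    intro t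
    rw [hWdef, Submodule.mem_map]
    constructor
    · rintro ⟨⟨v, t'⟩, hA, ht⟩
      simp only [LinearMap.snd_apply] at ht
      subst ht
      exact ⟨v, hA⟩
    · rintro ⟨v, hA⟩
      exact ⟨(v, t), hA, rfl⟩
  have hWclosed : IsClosed (W : Set H₀) := by
    refine isClosed_of_closure_subset ?_
    intro y hy
    obtain ⟨ts, hts, hty⟩ := mem_closure_iff_seq_limit.1 hy
    choose vs hvs using fun k => (hWmem (ts k)).1 (hts k)
    have hcauv : CauchySeq vs := by
      rw [Metric.cauchySeq_iff]
      intro ε hε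
      obtain ⟨N, hN⟩ := (Metric.cauchySeq_iff.1 hty.cauchySeq) (ε / c) (by positivity)
      refine ⟨N, fun m hm n hn => ?_⟩
      have hsub : (vs m - vs n, ts m - ts n) ∈ A := by
        have := A.sub_mem (hvs m) (hvs n)
        simpa [Prod.mk_sub_mk] using this
      obtain ⟨h1, h2, h3⟩ := (hAmem _).1 hsub
      have hle := hest _ _ ((hKmem _).1 h2) h1 h3
      rw [dist_eq_norm]
      calc ‖vs m - vs n‖ ≤ c * ‖ts m - ts n‖ := hle
        _ = c * dist (ts m) (ts n) := by rw [dist_eq_norm]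
        _ < c * (ε / c) := mul_lt_mul_of_pos_left (hN m hm n hn) hc1
        _ = ε := by field_simp
    obtain ⟨vL, hvL⟩ := cauchySeq_tendsto_of_complete hcauv
    have hmemA : (vL, y) ∈ A :=
      hAclosed.mem_of_tendsto (hvL.prodMk_nhds hty)
        (Filter.Eventually.of_forall fun k => hvs k)
    exact (hWmem y).2 ⟨vL, hmemA⟩
  haveI : CompleteSpace W := hWclosed.completeSpace_coe
  have hselW : ∀ t : ↥W, ∃ v : H₁, (v, (t:H₀)) ∈ A := fun t => (hWmem t).1 t.2
  choose σ hσ using hselW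
  have hσu : ∀ (v : H₁) (t : ↥W), (v, (t:H₀)) ∈ A → v = σ t :=
    fun v t h => hAuniq v (σ t) t h (hσ t)
  have hσadd : ∀ t t' : ↥W, σ (t + t') = σ t + σ t' := by
    intro t t'
    refine (hσu _ (t + t') ?_).symm
    have := A.add_mem (hσ t) (hσ t')
    simpa [Prod.mk_add_mk] using this
  have hσsmul : ∀ (a : ℂ) (t : ↥W), σ (a • t) = a • σ t := by
    intro a t
    refine (hσu _ (a • t) ?_).symm
    have := A.smul_mem a (hσ t)
    simpa [Prod.smul_mk] using this
  have hσbound : ∀ t : ↥W, ‖σ t‖ ≤ c * ‖t‖ := by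
    intro t
    obtain ⟨h1, h2, h3⟩ := (hAmem _).1 (hσ t)
    exact hest _ _ ((hKmem _).1 h2) h1 h3
  set ℓ : ↥W →L[ℂ] ℂ := LinearMap.mkContinuous
    { toFun := fun t => (inner ℂ f (σ t) : ℂ)
      map_add' := fun t t' => by
        show (inner ℂ f (σ (t + t')) : ℂ) = inner ℂ f (σ t) + inner ℂ f (σ t')
        rw [hσadd, inner_add_right]
      map_smul' := fun a t => by
        show (inner ℂ f (σ (a • t)) : ℂ) = a * inner ℂ f (σ t)
        rw [hσsmul, inner_smul_right] }
    (‖f‖ * c)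
    (fun t => by
      calc ‖(inner ℂ f (σ t) : ℂ)‖ ≤ ‖f‖ * ‖σ t‖ := norm_inner_le_norm _ _
        _ ≤ ‖f‖ * (c * ‖t‖) :=
            mul_le_mul_of_nonneg_left (hσbound t) (norm_nonneg f)
        _ = ‖f‖ * c * ‖t‖ := by ring) with hℓdef
  set u₀ : ↥W := (InnerProductSpace.toDual ℂ ↥W).symm ℓ with hu₀def
  set u : H₀ := (u₀ : H₀) with hudef
  have hu₀ : ∀ t : ↥W, (inner ℂ u (t:H₀) : ℂ) = inner ℂ f (σ t) := by
    intro t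
    have h1 : (inner ℂ u₀ t : ℂ) = ℓ t := InnerProductSpace.toDual_symm_apply
    rw [Submodule.coe_inner] at h1
    exact h1
  -- the key identity
  have hkey : ∀ q : H₁ × H₀, q ∈ T.adjoint.graph → (inner ℂ u q.2 : ℂ) = inner ℂ f q.1 := by
    rintro ⟨v, t⟩ hvt
    set v₁ : H₁ := (K.orthogonalProjection v : H₁) with hv₁def
    set v₂ : H₁ := v - v₁ with hv₂def
    have hv₂ : v₂ ∈ Kᗮ := Submodule.sub_starProjection_mem_orthogonal (K := K) v
    have hv₂T : (v₂, (0:H₀)) ∈ T.adjoint.graph := by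
      rw [stmt7_mem_adj_graph_iff hTdense]
      rintro ⟨x, z⟩ hxz
      have hz : z ∈ K := (hKmem z).2 (hRanKer x z hxz)
      have h0 : (inner ℂ v₂ z : ℂ) = 0 := (Submodule.mem_orthogonal' K v₂).1 hv₂ z hz
      simp [h0]
    have hv₁T : (v₁, t) ∈ T.adjoint.graph := by
      have := T.adjoint.graph.sub_mem hvt hv₂T
      simpa [Prod.mk_sub_mk, hv₂def, sub_sub_cancel] using this
    have hv₁K : v₁ ∈ K := SetLike.coe_mem _
    set hh : H₁ := (ℋ.orthogonalProjection v₁ : H₁) with hhdef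
    have hhH : hh ∈ ℋ := SetLike.coe_mem _
    set v' : H₁ := v₁ - hh with hv'def
    have hv'perp : v' ∈ ℋᗮ := Submodule.sub_starProjection_mem_orthogonal (K := ℋ) v₁
    obtain ⟨hhS, hhT⟩ := (hHmem hh).1 hhH
    have hv'T : (v', t) ∈ T.adjoint.graph := by
      have := T.adjoint.graph.sub_mem hv₁T hhT
      simpa [Prod.mk_sub_mk] using this
    have hhK : hh ∈ K := (hKmem hh).2 hhS
    have hv'K : v' ∈ K := K.sub_mem hv₁K hhK
    have hv'A : (v', t) ∈ A := (hAmem _).2 ⟨hv'T, hv'K, hv'perp⟩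
    have htW : t ∈ W := (hWmem t).2 ⟨v', hv'A⟩
    have hσt : v' = σ ⟨t, htW⟩ := hσu v' ⟨t, htW⟩ hv'A
    have h1 : (inner ℂ u t : ℂ) = inner ℂ f v' := by
      have := hu₀ ⟨t, htW⟩
      rw [← hσt] at this
      exact this
    have hfK : f ∈ K := (hKmem f).2 (hRanKer x₀ f hx₀)
    have h2 : (inner ℂ f v₂ : ℂ) = 0 := (Submodule.mem_orthogonal K v₂).1 hv₂ f hfK
    have h3 : (inner ℂ f hh : ℂ) = 0 := by
      have h5 := (stmt7_mem_adj_graph_iff hTdense hh 0).1 hhT (x₀, f) hx₀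
      have h6 : (inner ℂ hh f : ℂ) = 0 := by simpa using h5.symm
      rw [← inner_conj_symm, h6, map_zero]
    have hv : v = v₂ + hh + v' := by
      rw [hv₂def, hv'def]
      abel
    show (inner ℂ u t : ℂ) = inner ℂ f v
    rw [h1, hv, inner_add_right, inner_add_right, h2, h3]
    ring
  have hugraph : (u, f) ∈ T.graph :=
    stmt7_mem_graph_of_forall_adjoint hTclosed hTdense hkey
  obtain ⟨w, hwA⟩ : ∃ w : H₁, (w, u) ∈ A := (hWmem u).1 u₀.2
  have hwT : (w, u) ∈ T.adjoint.graph := ((hAmem _).1 hwA).1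
  have huorth : ∀ v : H₀, (v, (0:H₁)) ∈ T.graph → (inner ℂ u v : ℂ) = 0 := by
    intro v hv
    have := (stmt7_mem_adj_graph_iff hTdense w u).1 hwT (v, 0) hv
    simpa using this
  refine ⟨u, ⟨hugraph, huorth, ⟨w, hwT⟩⟩, ?_⟩
  intro u' hu'graph hu'orth
  have hsub : (u' - u, (0:H₁)) ∈ T.graph := by
    have := T.graph.sub_mem hu'graph hugraph
    simpa [Prod.mk_sub_mk] using this
  have e1 : (inner ℂ u' (u' - u) : ℂ) = 0 := hu'orth _ hsub
  have e2 : (inner ℂ u (u' - u) : ℂ) = 0 := huorth _ hsub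
  have : (inner ℂ (u' - u) (u' - u) : ℂ) = 0 := by
    rw [inner_sub_left, e1, e2, sub_zero]
  have h0 : u' - u = 0 := inner_self_eq_zero.1 this
  exact sub_eq_zero.1 h0
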